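/- Pareto-completeness of the weighted maximum: for any Pareto-optimal solution P* with strictly positive objective values F_i(P*) > 0, the weight vector defined by w_i = (1/F_i(P*)) / (∑_j 1/F_j(P*)) makes P* a minimizer of the weighted maximum max_i w_i F_i(P) over all solutions. -/
import Mathlib


theorem wm_pareto_complete {S : Type*} (n : ℕ) (hn : 0 < n)
    (F : S → (Fin n → ℝ)) (hpos : ∀ P : S, ∀ i, 0 < F P i)
    (Pstar : S)
    (hpareto : ¬ ∃ P : S, (∀ i, F P i ≤ F Pstar i) ∧ (∃ j, F P j < F Pstar j))
    (w : Fin n → ℝ)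
    (hw : ∀ i, w i = (F Pstar i)⁻¹ / ∑ j, (F Pstar j)⁻¹)
    (WM : S → ℝ)
    (hWM : ∀ P, WM P = Finset.univ.sup' (Finset.univ_nonempty_iff.mpr ⟨⟨0, hn⟩⟩)
      (fun i => w i * F P i)) :
    ∀ P : S, WM Pstar ≤ WM P := by
  intro P
  set c : ℝ := ∑ j, (F Pstar j)⁻¹ with hc
  have hne : (Finset.univ : Finset (Fin n)).Nonempty :=
    Finset.univ_nonempty_iff.mpr ⟨⟨0, hn⟩⟩
  have hcpos : 0 < c := Finset.sum_pos (fun j _ => inv_pos.mpr (hpos Pstar j)) hne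
  have hval : ∀ i, w i * F Pstar i = 1 / c := by
    intro i
    rw [hw i, div_mul_eq_mul_div, inv_mul_cancel₀ (ne_of_gt (hpos Pstar i))]
  have hstar : WM Pstar = 1 / c := by
    rw [hWM]
    apply le_antisymm
    · exact Finset.sup'_le _ _ (fun i _ => (hval i).le)
    · have := Finset.le_sup' (f := fun i => w i * F Pstar i)
        (Finset.mem_univ (⟨0, hn⟩ : Fin n))
      rwa [hval] at this
  by_contra h
  push_neg at h
  have hdom : ∀ i, F P i < F Pstar i := by
    intro i
    have hi : w i * F P i < 1 / c := by
      calc w i * F P i ≤ WM P := by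
            rw [hWM]
            exact Finset.le_sup' (f := fun i => w i * F P i) (Finset.mem_univ i)
        _ < WM Pstar := h
        _ = 1 / c := hstar
    rw [hw i, div_mul_eq_mul_div] at hi
    have h1 : (F Pstar i)⁻¹ * F P i < 1 := by
      have h2 := mul_lt_mul_of_pos_right hi hcpos
      rw [div_mul_cancel₀ _ (ne_of_gt hcpos), one_div_mul_cancel (ne_of_gt hcpos)] at h2
      exact h2
    rw [inv_mul_eq_div] at h1
    exact (div_lt_one (hpos Pstar i)).mp h1
  exact hpareto ⟨P, fun i => (hdom i).le, ⟨0, hn⟩, hdom _⟩
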